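/- arXiv:1901.04120 — 10 statements merged into one kernel-verified Lean document; each statement's English description precedes it below -/
import Mathlib

section
/- For every p ∈ (0,1), the function ψ(p) = p^{(1+γ)/2}(1−p)^{(1−γ)/2} is twice differentiable at p and satisfies the characteristic equation (𝒜ψ)(p) = −α·ψ(p) + (1/2)·((h−ℓ)/σ)²·p²(1−p)²·ψ''(p) = 0. -/
open Real

lemma key_hasDerivAt (a b p : ℝ) (hp : p ≠ 0) (hq : 1 - p ≠ 0) :
    HasDerivAt (fun x : ℝ => x ^ a * (1 - x) ^ b)
      (a * p ^ (a - 1) * (1 - p) ^ b - b * p ^ a * (1 - p) ^ (b - 1)) p := by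
  have h1 : HasDerivAt (fun x : ℝ => x ^ a) (a * p ^ (a - 1)) p :=
    Real.hasDerivAt_rpow_const (Or.inl hp)
  have h2 : HasDerivAt (fun x : ℝ => (1 - x) ^ b) (b * (1 - p) ^ (b - 1) * (-1)) p := by
    have h3 : HasDerivAt (fun x : ℝ => 1 - x) (-1) p := (hasDerivAt_id p).const_sub 1
    have := (Real.hasDerivAt_rpow_const (x := 1 - p) (p := b) (Or.inl hq)).comp p h3
    exact this
  have := h1.mul h2
  refine this.congr_deriv ?_
  ring

/-- For every `p ∈ (0,1)`, the fundamental solution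
`ψ(p) = p^((1+γ)/2) * (1-p)^((1-γ)/2)` is twice differentiable at `p` and satisfies
the characteristic equation `(𝒜ψ)(p) = -α ψ(p) + (1/2)((h-ℓ)/σ)² p²(1-p)² ψ''(p) = 0`. -/
theorem stmt_0 (h ℓ σ α γ : ℝ) (hh : 0 < h) (hℓ : ℓ < 0) (hσ : 0 < σ) (hα : 0 < α)
    (hγ : γ = Real.sqrt (1 + 8 * α * σ ^ 2 / (h - ℓ) ^ 2))
    (ψ : ℝ → ℝ)
    (hψ : ∀ p : ℝ, ψ p = p ^ ((1 + γ) / 2) * (1 - p) ^ ((1 - γ) / 2)) :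
    ∀ p ∈ Set.Ioo (0 : ℝ) 1,
      DifferentiableAt ℝ ψ p ∧ DifferentiableAt ℝ (deriv ψ) p ∧
      -α * ψ p + (1 / 2) * ((h - ℓ) / σ) ^ 2 * p ^ 2 * (1 - p) ^ 2
        * deriv (deriv ψ) p = 0 := by
  have hψeq : ψ = fun x : ℝ => x ^ ((1 + γ) / 2) * (1 - x) ^ ((1 - γ) / 2) := funext hψ
  set a : ℝ := (1 + γ) / 2 with ha
  set b : ℝ := (1 - γ) / 2 with hb
  set g : ℝ → ℝ := fun x => a * (x ^ (a - 1) * (1 - x) ^ b) - b * (x ^ a * (1 - x) ^ (b - 1))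
    with hg
  have D1 : ∀ x ∈ Set.Ioo (0 : ℝ) 1, HasDerivAt ψ (g x) x := by
    intro x hx
    rw [hψeq]
    have := key_hasDerivAt a b x (ne_of_gt hx.1) (by linarith [hx.2])
    convert this using 1
    ring
  intro p hp
  have hp0 : (0 : ℝ) < p := hp.1
  have hq0 : (0 : ℝ) < 1 - p := by linarith [hp.2]
  have hd1 := D1 p hp
  have hEv : deriv ψ =ᶠ[nhds p] g := by
    filter_upwards [isOpen_Ioo.mem_nhds hp] with x hx
    exact (D1 x hx).deriv
  have D2 : HasDerivAt g
      (a * ((a - 1) * p ^ (a - 1 - 1) * (1 - p) ^ b - b * p ^ (a - 1) * (1 - p) ^ (b - 1))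
        - b * (a * p ^ (a - 1) * (1 - p) ^ (b - 1) - (b - 1) * p ^ a * (1 - p) ^ (b - 1 - 1))) p := by
    have k1 := (key_hasDerivAt (a - 1) b p (ne_of_gt hp0) (ne_of_gt hq0)).const_mul a
    have k2 := (key_hasDerivAt a (b - 1) p (ne_of_gt hp0) (ne_of_gt hq0)).const_mul b
    exact k1.sub k2
  have hd2 : HasDerivAt (deriv ψ) _ p := D2.congr_of_eventuallyEq hEv
  refine ⟨hd1.differentiableAt, hd2.differentiableAt, ?_⟩
  rw [hψ p, hd2.deriv]
  have hhl : (0:ℝ) < h - ℓ := by linarith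
  have hγ2 : γ ^ 2 = 1 + 8 * α * σ ^ 2 / (h - ℓ) ^ 2 := by
    rw [hγ, sq_sqrt (by positivity)]
  have hγ2' : γ ^ 2 * (h - ℓ) ^ 2 = (h - ℓ) ^ 2 + 8 * α * σ ^ 2 := by
    rw [hγ2, add_mul, div_mul_cancel₀ _ (by positivity)]
    ring
  have r1 : p ^ (a - 1) = p ^ a / p := by rw [Real.rpow_sub hp0, Real.rpow_one]
  have r2 : p ^ (a - 1 - 1) = p ^ a / p ^ 2 := by
    rw [show a - 1 - 1 = a - 2 by ring, Real.rpow_sub hp0,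
      show (2:ℝ) = ((2:ℕ):ℝ) by norm_num, Real.rpow_natCast]
  have s1 : (1 - p) ^ (b - 1) = (1 - p) ^ b / (1 - p) := by
    rw [Real.rpow_sub hq0, Real.rpow_one]
  have s2 : (1 - p) ^ (b - 1 - 1) = (1 - p) ^ b / (1 - p) ^ 2 := by
    rw [show b - 1 - 1 = b - 2 by ring, Real.rpow_sub hq0,
      show (2:ℝ) = ((2:ℕ):ℝ) by norm_num, Real.rpow_natCast]
  rw [r1, r2, s1, s2, ha, hb]
  have hσ' : σ ≠ 0 := ne_of_gt hσ
  field_simp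
  linear_combination (p ^ ((1 + γ) / 2) * (1 - p) ^ ((1 - γ) / 2)) * hγ2'
end

section
/- For every p ∈ (0,1), the function T(p) = (2σ²/(h−ℓ)²)·(2p−1)·ln(p/(1−p)) is twice differentiable at p and satisfies (ℒT)(p) = (1/2)·((h−ℓ)/σ)²·p²(1−p)²·T''(p) = 1. -/
open Real Filter Topology

/-! Writing `T = c · (2p - 1) log (p / (1 - p))` with `c = 2σ² / (h - ℓ)²`, one computes
`T' = c (2 log (p / (1 - p)) + (2p - 1) / (p (1 - p)))` and, since
`4p(1 - p) + (2p - 1)² = 1`, `T'' = c / (p (1 - p))²`. The factor `p² (1 - p)²` in `ℒ` cancels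
this denominator and `((h - ℓ) / σ)²` cancels `c`. -/

section LogOdds

variable {x : ℝ}

theorem hasDerivAt_log_div_one_sub (hx0 : x ≠ 0) (hx1 : x ≠ 1) :
    HasDerivAt (fun y => log (y / (1 - y))) (1 / (x * (1 - x))) x := by
  have hx1' : 1 - x ≠ 0 := sub_ne_zero.mpr hx1.symm
  have hdiv : HasDerivAt (fun y => y / (1 - y)) (1 / (1 - x) ^ 2) x := by
    refine ((hasDerivAt_id x).div ((hasDerivAt_id x).const_sub 1) hx1').congr_deriv ?_
    simp only [id]
    field_simp
    ring
  refine (hdiv.log (div_ne_zero hx0 hx1')).congr_deriv ?_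
  field_simp

theorem hasDerivAt_mul_log_div_one_sub (hx0 : x ≠ 0) (hx1 : x ≠ 1) :
    HasDerivAt (fun y => (2 * y - 1) * log (y / (1 - y)))
      (2 * log (x / (1 - x)) + (2 * x - 1) / (x * (1 - x))) x := by
  have hlin : HasDerivAt (fun y : ℝ => 2 * y - 1) 2 x := by
    simpa using ((hasDerivAt_id x).const_mul 2).sub_const 1
  refine (hlin.mul (hasDerivAt_log_div_one_sub hx0 hx1)).congr_deriv ?_
  ring

theorem hasDerivAt_two_mul_log_div_one_sub_add (hx0 : x ≠ 0) (hx1 : x ≠ 1) :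
    HasDerivAt (fun y => 2 * log (y / (1 - y)) + (2 * y - 1) / (y * (1 - y)))
      (1 / (x * (1 - x)) ^ 2) x := by
  have hx1' : 1 - x ≠ 0 := sub_ne_zero.mpr hx1.symm
  have hlin : HasDerivAt (fun y : ℝ => 2 * y - 1) 2 x := by
    simpa using ((hasDerivAt_id x).const_mul 2).sub_const 1
  have hquad : HasDerivAt (fun y : ℝ => y * (1 - y)) (1 - 2 * x) x := by
    refine ((hasDerivAt_id x).mul ((hasDerivAt_id x).const_sub 1)).congr_deriv ?_
    simp only [id]
    ring
  refine (((hasDerivAt_log_div_one_sub hx0 hx1).const_mul 2).add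
    (hlin.div hquad (mul_ne_zero hx0 hx1'))).congr_deriv ?_
  field_simp
  ring

end LogOdds

/-- For every `p ∈ (0,1)`, `T(p) = (2σ²/(h-ℓ)²)(2p-1)·ln(p/(1-p))` is twice
differentiable at `p` and satisfies `(ℒT)(p) = (1/2)((h-ℓ)/σ)² p²(1-p)² T''(p) = 1`. -/
theorem stmt_4 (h ℓ σ : ℝ) (hhl : ℓ < h) (hσ : 0 < σ)
    (T : ℝ → ℝ)
    (hT : ∀ p : ℝ, T p = (2 * σ ^ 2 / (h - ℓ) ^ 2) * (2 * p - 1) * Real.log (p / (1 - p))) :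
    ∀ p ∈ Set.Ioo (0 : ℝ) 1,
      DifferentiableAt ℝ T p ∧ DifferentiableAt ℝ (deriv T) p ∧
      (1 / 2) * ((h - ℓ) / σ) ^ 2 * p ^ 2 * (1 - p) ^ 2 * deriv (deriv T) p = 1 := by
  rintro p ⟨hp0, hp1⟩
  set c := 2 * σ ^ 2 / (h - ℓ) ^ 2
  have hTc : T = fun y => c * ((2 * y - 1) * log (y / (1 - y))) :=
    funext fun y => by rw [hT, mul_assoc]
  have hT' : ∀ᶠ y in 𝓝 p,
      HasDerivAt T (c * (2 * log (y / (1 - y)) + (2 * y - 1) / (y * (1 - y)))) y :=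
    ((eventually_ne_nhds hp0.ne').and (eventually_ne_nhds hp1.ne)).mono fun y hy =>
      hTc ▸ (hasDerivAt_mul_log_div_one_sub hy.1 hy.2).const_mul c
  have hT'' : HasDerivAt (deriv T) (c * (1 / (p * (1 - p)) ^ 2)) p :=
    ((hasDerivAt_two_mul_log_div_one_sub_add hp0.ne' hp1.ne).const_mul c).congr_of_eventuallyEq
      (hT'.mono fun y hy => hy.deriv)
  refine ⟨hT'.self_of_nhds.differentiableAt, hT''.differentiableAt, ?_⟩
  have hhl' : h - ℓ ≠ 0 := sub_ne_zero.mpr hhl.ne'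
  have hp1' : 1 - p ≠ 0 := sub_ne_zero.mpr hp1.ne'
  rw [hT''.deriv, show c = 2 * σ ^ 2 / (h - ℓ) ^ 2 from rfl]
  field_simp
end

section
/- Let 0 < a < b < 1 and let c₁, c₂ be real numbers such that c₁ψ'(a) + c₂φ'(a) < 0 and c₁ψ'(b) + c₂φ'(b) > 0. Then c₁ > 0 and c₂ > 0. -/
/-!
Both `ψ` and `φ` are of the form `p ↦ p ^ m * (1 - p) ^ (1 - m)`, whose derivative
`p ^ (m - 1) * (1 - p) ^ (-m) * (m - p)` has derivative `m (m - 1) p ^ (m - 2) (1 - p) ^ (-m - 1)`.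
Since `γ ≥ 1`, both exponents `(1 ± γ) / 2` satisfy `m (m - 1) ≥ 0`, so `ψ'` and `φ'` are
nondecreasing on `(0, 1)`, with `ψ' > 0 > φ'`. If `c₁ ≤ 0`, positivity at `b` forces `c₂ < 0`, and
then `c₁ ψ' + c₂ φ'` is nonincreasing, contradicting its sign change from `a` to `b`. Once `c₁ > 0`,
negativity at `a` forces `c₂ > 0`.
-/

open Real Set

lemma pos_and_pos_of_combination_sign_change {α : Type*} [Preorder α] {f g : α → ℝ} {s : Set α}
    (hf : MonotoneOn f s) (hg : MonotoneOn g s) (hf_pos : ∀ x ∈ s, 0 < f x)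
    (hg_neg : ∀ x ∈ s, g x < 0) {a b : α} (ha : a ∈ s) (hb : b ∈ s) (hab : a ≤ b)
    {c₁ c₂ : ℝ} (hlow : c₁ * f a + c₂ * g a < 0) (hhigh : 0 < c₁ * f b + c₂ * g b) :
    0 < c₁ ∧ 0 < c₂ := by
  have hfa := hf_pos a ha
  have hgb := hg_neg b hb
  have hfab := hf ha hb hab
  have hgab := hg ha hb hab
  have hc₁ : 0 < c₁ := by
    by_contra! hc₁
    have hc₂ : c₂ < 0 := by nlinarith
    nlinarith
  exact ⟨hc₁, by nlinarith [hg_neg a ha]⟩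

noncomputable def powMix (m p : ℝ) : ℝ := p ^ m * (1 - p) ^ (1 - m)

noncomputable def powMixDeriv (m p : ℝ) : ℝ := p ^ (m - 1) * (1 - p) ^ (-m) * (m - p)

lemma hasDerivAt_powMix {m p : ℝ} (hp : p ∈ Ioo 0 1) :
    HasDerivAt (powMix m) (powMixDeriv m p) p := by
  obtain ⟨hp0, hp1⟩ := hp
  have hq : 0 < 1 - p := by linarith
  have h := ((hasDerivAt_id p).rpow_const (p := m) (Or.inl hp0.ne')).mul
    (((hasDerivAt_id p).const_sub 1).rpow_const (p := 1 - m) (Or.inl hq.ne'))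
  refine h.congr_deriv ?_
  simp only [id, powMixDeriv]
  rw [show (1:ℝ) - m - 1 = -m by ring, rpow_sub_one hp0.ne', sub_eq_add_neg 1 m, rpow_add hq,
    rpow_one]
  field_simp
  ring

lemma deriv_powMix {m p : ℝ} (hp : p ∈ Ioo 0 1) : deriv (powMix m) p = powMixDeriv m p :=
  (hasDerivAt_powMix hp).deriv

lemma hasDerivAt_powMixDeriv {m p : ℝ} (hp : p ∈ Ioo 0 1) :
    HasDerivAt (powMixDeriv m) (m * (m - 1) * (p ^ (m - 2) * (1 - p) ^ (-m - 1))) p := by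
  obtain ⟨hp0, hp1⟩ := hp
  have hq : 0 < 1 - p := by linarith
  have h := (((hasDerivAt_id p).rpow_const (p := m - 1) (Or.inl hp0.ne')).mul
    (((hasDerivAt_id p).const_sub 1).rpow_const (p := -m) (Or.inl hq.ne'))).mul
    ((hasDerivAt_id p).const_sub m)
  refine h.congr_deriv ?_
  simp only [id, Pi.mul_apply]
  rw [show m - 1 - 1 = m - 2 by ring, show m - 1 = m - 2 + 1 by ring, rpow_add_one hp0.ne',
    rpow_sub_one hq.ne']
  field_simp
  ring

lemma monotoneOn_powMixDeriv {m : ℝ} (hm : 0 ≤ m * (m - 1)) :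
    MonotoneOn (powMixDeriv m) (Ioo 0 1) := by
  refine monotoneOn_of_deriv_nonneg (convex_Ioo 0 1)
    (fun p hp ↦ (hasDerivAt_powMixDeriv hp).continuousAt.continuousWithinAt)
    (fun p hp ↦ (hasDerivAt_powMixDeriv (interior_subset hp)).differentiableAt.differentiableWithinAt)
    fun p hp ↦ ?_
  rw [interior_Ioo] at hp
  rw [(hasDerivAt_powMixDeriv hp).deriv]
  have hq : 0 < 1 - p := by linarith [hp.2]
  have := rpow_pos_of_pos hp.1 (m - 2)
  have := rpow_pos_of_pos hq (-m - 1)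
  positivity

lemma powMixDeriv_pos {m p : ℝ} (hm : 1 ≤ m) (hp : p ∈ Ioo 0 1) : 0 < powMixDeriv m p := by
  have hq : 0 < 1 - p := by linarith [hp.2]
  have := rpow_pos_of_pos hp.1 (m - 1)
  have := rpow_pos_of_pos hq (-m)
  have : 0 < m - p := by linarith [hp.2]
  unfold powMixDeriv
  positivity

lemma powMixDeriv_neg {m p : ℝ} (hm : m ≤ 0) (hp : p ∈ Ioo 0 1) : powMixDeriv m p < 0 := by
  have hq : 0 < 1 - p := by linarith [hp.2]
  have := mul_pos (rpow_pos_of_pos hp.1 (m - 1)) (rpow_pos_of_pos hq (-m))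
  exact mul_neg_of_pos_of_neg this (by linarith [hp.1])

theorem stmt_6_general (h ℓ σ α γ : ℝ) (hα : 0 < α)
    (hγ : γ = Real.sqrt (1 + 8 * α * σ ^ 2 / (h - ℓ) ^ 2))
    (ψ φ : ℝ → ℝ)
    (hψ : ∀ p : ℝ, ψ p = p ^ ((1 + γ) / 2) * (1 - p) ^ ((1 - γ) / 2))
    (hφ : ∀ p : ℝ, φ p = p ^ ((1 - γ) / 2) * (1 - p) ^ ((1 + γ) / 2))
    (a b c₁ c₂ : ℝ) (ha : 0 < a) (hab : a < b) (hb : b < 1)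
    (hlow : c₁ * deriv ψ a + c₂ * deriv φ a < 0)
    (hhigh : c₁ * deriv ψ b + c₂ * deriv φ b > 0) :
    0 < c₁ ∧ 0 < c₂ := by
  have hγ1 : 1 ≤ γ := hγ ▸ one_le_sqrt.2 (le_add_of_nonneg_right (by positivity))
  have hψ_eq : ψ = powMix ((1 + γ) / 2) := funext fun p ↦ by
    rw [hψ, powMix, show 1 - (1 + γ) / 2 = (1 - γ) / 2 by ring]
  have hφ_eq : φ = powMix ((1 - γ) / 2) := funext fun p ↦ by
    rw [hφ, powMix, show 1 - (1 - γ) / 2 = (1 + γ) / 2 by ring]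
  have ha' : a ∈ Ioo 0 1 := ⟨ha, hab.trans hb⟩
  have hb' : b ∈ Ioo 0 1 := ⟨ha.trans hab, hb⟩
  subst hψ_eq hφ_eq
  rw [deriv_powMix ha', deriv_powMix ha'] at hlow
  rw [deriv_powMix hb', deriv_powMix hb'] at hhigh
  exact pos_and_pos_of_combination_sign_change (monotoneOn_powMixDeriv (by nlinarith))
    (monotoneOn_powMixDeriv (by nlinarith)) (fun p hp ↦ powMixDeriv_pos (by linarith) hp)
    (fun p hp ↦ powMixDeriv_neg (by linarith) hp) ha' hb' hab.le hlow hhigh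

/-- If `0 < a < b < 1` and `c₁ψ'(a) + c₂φ'(a) < 0` while `c₁ψ'(b) + c₂φ'(b) > 0`,
then `c₁ > 0` and `c₂ > 0`. -/
theorem stmt_6 (h ℓ σ α γ : ℝ) (hh : 0 < h) (hℓ : ℓ < 0) (hσ : 0 < σ) (hα : 0 < α)
    (hγ : γ = Real.sqrt (1 + 8 * α * σ ^ 2 / (h - ℓ) ^ 2))
    (ψ φ : ℝ → ℝ)
    (hψ : ∀ p : ℝ, ψ p = p ^ ((1 + γ) / 2) * (1 - p) ^ ((1 - γ) / 2))
    (hφ : ∀ p : ℝ, φ p = p ^ ((1 - γ) / 2) * (1 - p) ^ ((1 + γ) / 2))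
    (a b c₁ c₂ : ℝ) (ha : 0 < a) (hab : a < b) (hb : b < 1)
    (hlow : c₁ * deriv ψ a + c₂ * deriv φ a < 0)
    (hhigh : c₁ * deriv ψ b + c₂ * deriv φ b > 0) :
    0 < c₁ ∧ 0 < c₂ :=
  stmt_6_general h ℓ σ α γ hα hγ ψ φ hψ hφ a b c₁ c₂ ha hab hb hlow hhigh
end

section
/- Assume h > 0 > ℓ, α > 0, σ > 0, and ℓ^† < kα < h^†. Then Q₁ and Q₂ are continuous on [1,∞), Q₁(β) > 0 for all β ≥ 1, and there exists β ∈ (1,∞) such that Q₁(β) = Q₂(β). -/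
open Real Set Filter Topology

/-!
Write `Q₁ = r · R₁` and `Q₂ = r⁻¹ · R₂` with `r = (γ - 1)/(γ + 1) ∈ (0, 1)` and `R₁, R₂` ratios
`(A - d β^p)/(B + b β^q)` with positive numerators and denominators on `β > 0`. At `β = 1` both
ratios equal `(A - d)/(B + b)`, so `Q₁ 1 < Q₂ 1` because `r < r⁻¹`. As `β → ∞`, `Q₁` stays above
`r A/(B + b) > 0` (its exponents are negative), while `Q₂ = O(1/β)` (its exponents are
`p ≥ 0` and `p + 1`). The intermediate value theorem gives the crossing.
-/

noncomputable def rpowRatio (A d B b p q β : ℝ) : ℝ := (A - d * β ^ p) / (B + b * β ^ q)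

section rpowRatio

variable {A d B b p q β : ℝ}

lemma continuousOn_rpowRatio (hB : 0 < B) (hb : 0 ≤ b) :
    ContinuousOn (rpowRatio A d B b p q) (Ioi 0) := by
  have hpow (e : ℝ) : ContinuousOn (fun x : ℝ => x ^ e) (Ioi 0) :=
    continuousOn_id.rpow_const fun x hx => Or.inl (ne_of_gt hx)
  refine (continuousOn_const.sub (continuousOn_const.mul (hpow p))).div
    (continuousOn_const.add (continuousOn_const.mul (hpow q))) fun x hx => ?_
  have : 0 < x ^ q := rpow_pos_of_pos hx q
  positivity

lemma rpowRatio_pos (hA : 0 < A) (hd : d ≤ 0) (hB : 0 < B) (hb : 0 ≤ b) (hβ : 0 < β) :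
    0 < rpowRatio A d B b p q β := by
  have := rpow_pos_of_pos hβ p
  have := rpow_pos_of_pos hβ q
  unfold rpowRatio
  apply div_pos <;> nlinarith

@[simp]
lemma rpowRatio_one : rpowRatio A d B b p q 1 = (A - d) / (B + b) := by
  simp [rpowRatio]

lemma div_le_rpowRatio (hA : 0 ≤ A) (hd : d ≤ 0) (hB : 0 < B) (hb : 0 ≤ b) (hq : q ≤ 0)
    (hβ : 1 ≤ β) : A / (B + b) ≤ rpowRatio A d B b p q β := by
  have := rpow_pos_of_pos (zero_lt_one.trans_le hβ) p
  have := rpow_pos_of_pos (zero_lt_one.trans_le hβ) q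
  have := rpow_le_one_of_one_le_of_nonpos hβ hq
  exact div_le_div₀ (by nlinarith) (by nlinarith) (by positivity) (by nlinarith)

lemma rpowRatio_le_div (hA : 0 ≤ A) (hd : d ≤ 0) (hB : 0 ≤ B) (hb : 0 < b) (hp : 0 ≤ p)
    (hq : q = p + 1) (hβ : 1 ≤ β) : rpowRatio A d B b p q β ≤ (A - d) / b / β := by
  have hβ0 : 0 < β := zero_lt_one.trans_le hβ
  have hβp : 1 ≤ β ^ p := one_le_rpow hβ hp
  have hβq : β ^ q = β ^ p * β := by rw [hq, rpow_add_one hβ0.ne']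
  have hAd : 0 ≤ A - d := by linarith
  calc rpowRatio A d B b p q β ≤ (A - d) * β ^ p / (b * β ^ q) := by
        refine div_le_div₀ (by positivity) (by nlinarith) (by positivity) (by nlinarith)
    _ = (A - d) / b / β := by
        rw [hβq]
        field_simp

end rpowRatio

lemma exists_mem_Ioi_eq_of_lt_of_gt {f g : ℝ → ℝ} {a b : ℝ} (hf : ContinuousOn f (Ici a))
    (hg : ContinuousOn g (Ici a)) (hab : a ≤ b) (ha : f a < g a) (hb : g b < f b) :
    ∃ c ∈ Ioi a, f c = g c := by
  have hcont : ContinuousOn (fun x => g x - f x) (Icc a b) :=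
    (hg.sub hf).mono Icc_subset_Ici_self
  obtain ⟨c, hc, hfc⟩ := intermediate_value_Ioo' hab hcont
    (show (0 : ℝ) ∈ Ioo (g b - f b) (g a - f a) from ⟨by linarith, by linarith⟩)
  exact ⟨c, hc.1, by linarith [hfc]⟩

lemma exists_mem_Ioi_one_eq_of_ge_of_le_div {f g : ℝ → ℝ} {c C : ℝ}
    (hf : ContinuousOn f (Ici 1)) (hg : ContinuousOn g (Ici 1)) (h1 : f 1 < g 1) (hc : 0 < c)
    (hf_ge : ∀ β, 1 ≤ β → c ≤ f β) (hg_le : ∀ β, 1 ≤ β → g β ≤ C / β) :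
    ∃ β ∈ Ioi 1, f β = g β := by
  have hdecay : Tendsto (fun β => C / β) atTop (𝓝 0) := tendsto_const_nhds.div_atTop tendsto_id
  obtain ⟨β, hβ_small, hβ1⟩ :=
    ((hdecay.eventually (gt_mem_nhds hc)).and (eventually_ge_atTop 1)).exists
  exact exists_mem_Ioi_eq_of_lt_of_gt hf hg hβ1 h1
    (by linarith [hg_le β hβ1, hf_ge β hβ1])

lemma one_lt_sqrt_one_add {x : ℝ} (hx : 0 < x) : 1 < √(1 + x) := by
  rw [lt_sqrt zero_le_one]
  linarith

/-- Under `h > 0 > ℓ`, `α > 0`, `σ > 0`, `ℓ† < kα < h†`, the smooth-pasting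
functions `Q₁` and `Q₂` are continuous on `[1,∞)`, `Q₁ > 0` on `[1,∞)`, and
there exists `β ∈ (1,∞)` with `Q₁(β) = Q₂(β)`. -/
theorem stmt_8 (h ℓ σ α γ hd ld k : ℝ) (hh : 0 < h) (hℓ : ℓ < 0) (hσ : 0 < σ) (hα : 0 < α)
    (hγ : γ = Real.sqrt (1 + 8 * α * σ ^ 2 / (h - ℓ) ^ 2))
    (hld : ld < k * α) (hhd : k * α < hd)
    (Q₁ Q₂ : ℝ → ℝ)
    (hQ₁ : ∀ β : ℝ, Q₁ β = ((γ - 1) / (γ + 1)) *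
      ((-ℓ - (ld - k * α) * β ^ (-((γ + 1) / 2))) / (h + (hd - k * α) * β ^ ((1 - γ) / 2))))
    (hQ₂ : ∀ β : ℝ, Q₂ β = ((γ + 1) / (γ - 1)) *
      ((-ℓ - (ld - k * α) * β ^ ((γ - 1) / 2)) / (h + (hd - k * α) * β ^ ((γ + 1) / 2)))) :
    ContinuousOn Q₁ (Set.Ici 1) ∧ ContinuousOn Q₂ (Set.Ici 1) ∧
    (∀ β : ℝ, 1 ≤ β → 0 < Q₁ β) ∧
    ∃ β ∈ Set.Ioi (1 : ℝ), Q₁ β = Q₂ β := by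
  have hhℓ : 0 < h - ℓ := by linarith
  have hγ1 : 1 < γ := hγ ▸ one_lt_sqrt_one_add (by positivity)
  set r := (γ - 1) / (γ + 1)
  have hr : 0 < r := div_pos (by linarith) (by linarith)
  have hr1 : r < r⁻¹ := by
    rw [inv_div, div_lt_div_iff₀ (by linarith) (by linarith)]
    nlinarith
  have hQ₁' (β : ℝ) : Q₁ β = r * rpowRatio (-ℓ) (ld - k * α) h (hd - k * α)
      (-((γ + 1) / 2)) ((1 - γ) / 2) β := hQ₁ β
  have hQ₂' (β : ℝ) : Q₂ β = r⁻¹ * rpowRatio (-ℓ) (ld - k * α) h (hd - k * α)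
      ((γ - 1) / 2) ((γ + 1) / 2) β := by rw [hQ₂, inv_div]; rfl
  have hnum : 0 < -ℓ := neg_pos.2 hℓ
  have hdk : ld - k * α ≤ 0 := by linarith
  have hb : 0 < hd - k * α := sub_pos.2 hhd
  have hIci : Ici (1 : ℝ) ⊆ Ioi 0 := Ici_subset_Ioi.2 zero_lt_one
  have hQ₁cont : ContinuousOn Q₁ (Ici 1) :=
    ((continuousOn_const.mul (continuousOn_rpowRatio hh hb.le)).mono hIci).congr
      fun β _ => hQ₁' β
  have hQ₂cont : ContinuousOn Q₂ (Ici 1) :=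
    ((continuousOn_const.mul (continuousOn_rpowRatio hh hb.le)).mono hIci).congr
      fun β _ => hQ₂' β
  have hQ₁pos (β : ℝ) (hβ : 1 ≤ β) : 0 < Q₁ β := by
    rw [hQ₁']
    exact mul_pos hr (rpowRatio_pos hnum hdk hh hb.le (hIci hβ))
  have hQ₁_lt_Q₂_one : Q₁ 1 < Q₂ 1 := by
    rw [hQ₁', hQ₂', rpowRatio_one, rpowRatio_one]
    exact mul_lt_mul_of_pos_right hr1 (div_pos (by linarith) (by linarith))
  refine ⟨hQ₁cont, hQ₂cont, hQ₁pos, exists_mem_Ioi_one_eq_of_ge_of_le_div hQ₁cont hQ₂cont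
    hQ₁_lt_Q₂_one (c := r * (-ℓ / (h + (hd - k * α))))
    (C := r⁻¹ * ((-ℓ - (ld - k * α)) / (hd - k * α))) (by positivity) (fun β hβ => ?_)
    (fun β hβ => ?_)⟩
  · rw [hQ₁']
    gcongr
    exact div_le_rpowRatio hnum.le hdk hh hb.le (by linarith) hβ
  · rw [hQ₂', mul_div_assoc]
    gcongr
    exact rpowRatio_le_div hnum.le hdk hh.le hb (by linarith) (by ring) hβ
end

section
/- Let θ̲ = −(γ−1)ℓ/((γ+1)h − (γ−1)ℓ) and A = (−2ℓh/α)/sqrt((γ²−1)(−ℓh)) · (((γ−1)/(γ+1))·(−ℓ/h))^{γ/2}. Then θ̲ ∈ (0,1), and the value-matching and smooth-pasting conditions hold at θ̲: A·φ(θ̲) = −(θ̲h + (1−θ̲)ℓ)/α and A·φ'(θ̲) = −(h−ℓ)/α. -/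
open Real

/-!
Put `x = (γ-1)(-ℓ)` and `y = (γ+1)h`, both positive since `γ > 1`, so that `θ̲ = x/(x+y)` and
`1 - θ̲ = y/(x+y)`. Then `(γ²-1)(-ℓh) = xy` and the base of the power in `A` is `x/y`, so
`A·φ(θ̲) = (-2ℓh/α)/(x+y)`, which is the exit reward at `θ̲`. Smooth pasting follows from
`φ'/φ = (1-γ)/(2p) - (1+γ)/(2(1-p))`, which at `θ̲` equals `(x+y)(h-ℓ)/(2ℓh)`.
-/

lemma one_lt_sqrt_one_add_s10 {c : ℝ} (hc : 0 < c) : 1 < √(1 + c) :=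
  (lt_sqrt zero_le_one).mpr (by rw [one_pow]; linarith)

lemma hasDerivAt_rpow_mul_one_sub_rpow (a b : ℝ) {p : ℝ} (hp₀ : p ≠ 0) (hp₁ : p ≠ 1) :
    HasDerivAt (fun q : ℝ => q ^ a * (1 - q) ^ b)
      (p ^ a * (1 - p) ^ b * (a / p - b / (1 - p))) p := by
  have hq : 1 - p ≠ 0 := sub_ne_zero.mpr hp₁.symm
  have hleft := hasDerivAt_rpow_const (p := a) (Or.inl hp₀)
  have hright := (hasDerivAt_rpow_const (p := b) (Or.inl hq)).comp p
    ((hasDerivAt_id p).const_sub 1)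
  refine (hleft.mul hright).congr_deriv ?_
  rw [Function.comp_apply, rpow_sub_one hp₀, rpow_sub_one hq]
  field_simp
  ring

lemma div_add_rpow_mul_div_add_rpow {x y : ℝ} (hx : 0 < x) (hy : 0 < y) (a b : ℝ) :
    (x / (x + y)) ^ a * (y / (x + y)) ^ b = x ^ a * y ^ b / (x + y) ^ (a + b) := by
  have hxy : 0 < x + y := add_pos hx hy
  rw [div_rpow hx.le hxy.le, div_rpow hy.le hxy.le, div_mul_div_comm, rpow_add hxy]

lemma div_rpow_half_mul_rpow_mul_rpow {x y : ℝ} (hx : 0 < x) (hy : 0 < y) (g : ℝ) :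
    (x / y) ^ (g / 2) * (x ^ ((1 - g) / 2) * y ^ ((1 + g) / 2)) = √(x * y) := by
  calc (x / y) ^ (g / 2) * (x ^ ((1 - g) / 2) * y ^ ((1 + g) / 2))
      = x ^ (g / 2) * x ^ ((1 - g) / 2) * (y ^ ((1 + g) / 2) / y ^ (g / 2)) := by
        rw [div_rpow hx.le hy.le]; ring
    _ = x ^ ((1 : ℝ) / 2) * y ^ ((1 : ℝ) / 2) := by
        rw [← rpow_add hx, ← rpow_sub hy]; ring_nf
    _ = √(x * y) := by rw [sqrt_eq_rpow, mul_rpow hx.le hy.le]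

/-- The exit threshold `θ̲ = -(γ-1)ℓ/((γ+1)h - (γ-1)ℓ)` lies in `(0,1)`, and with
`A = (-2ℓh/α)/√((γ²-1)(-ℓh)) · (((γ-1)/(γ+1))·(-ℓ/h))^(γ/2)` the value-matching
and smooth-pasting conditions hold at `θ̲`. -/
theorem stmt_10 (h ℓ σ α γ : ℝ) (hh : 0 < h) (hℓ : ℓ < 0) (hσ : 0 < σ) (hα : 0 < α)
    (hγ : γ = Real.sqrt (1 + 8 * α * σ ^ 2 / (h - ℓ) ^ 2))
    (φ : ℝ → ℝ)
    (hφ : ∀ p : ℝ, φ p = p ^ ((1 - γ) / 2) * (1 - p) ^ ((1 + γ) / 2))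
    (θ A : ℝ)
    (hθ : θ = -(γ - 1) * ℓ / ((γ + 1) * h - (γ - 1) * ℓ))
    (hA : A = (-2 * ℓ * h / α) / Real.sqrt ((γ ^ 2 - 1) * (-ℓ * h)) *
      (((γ - 1) / (γ + 1)) * (-ℓ / h)) ^ (γ / 2)) :
    θ ∈ Set.Ioo (0 : ℝ) 1 ∧
    A * φ θ = -(θ * h + (1 - θ) * ℓ) / α ∧
    A * deriv φ θ = -(h - ℓ) / α := by
  have hγ₁ : 1 < γ := hγ ▸ one_lt_sqrt_one_add_s10
    (div_pos (by positivity) (pow_pos (by linarith) 2))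
  set x := (γ - 1) * (-ℓ) with hx_def
  set y := (γ + 1) * h with hy_def
  have hx : 0 < x := mul_pos (by linarith) (by linarith)
  have hy : 0 < y := mul_pos (by linarith) hh
  have hxy : 0 < x + y := add_pos hx hy
  have hθx : θ = x / (x + y) := by rw [hθ]; congr 1 <;> ring
  have hθy : 1 - θ = y / (x + y) := by rw [hθx]; field_simp; ring
  have hθ₀ : 0 < θ := hθx ▸ div_pos hx hxy
  have hθ₁ : θ < 1 := by rw [hθx, div_lt_one hxy]; linarith
  have hAφ : A * φ θ = (-2 * ℓ * h / α) / (x + y) := by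
    have hprod : (γ ^ 2 - 1) * (-ℓ * h) = x * y := by ring
    have hratio : (γ - 1) / (γ + 1) * (-ℓ / h) = x / y := by
      rw [hx_def, hy_def]; field_simp
    rw [hA, hφ, hprod, hratio, hθy, hθx, div_add_rpow_mul_div_add_rpow hx hy,
      show (1 - γ) / 2 + (1 + γ) / 2 = (1 : ℝ) by ring, rpow_one, mul_assoc, ← mul_div_assoc,
      div_rpow_half_mul_rpow_mul_rpow hx hy]
    field_simp [(sqrt_pos.mpr (mul_pos hx hy)).ne']
  have hderiv : deriv φ θ = φ θ * ((1 - γ) / 2 / θ - (1 + γ) / 2 / (1 - θ)) := by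
    rw [funext hφ, (hasDerivAt_rpow_mul_one_sub_rpow _ _ hθ₀.ne' hθ₁.ne).deriv]
  refine ⟨⟨hθ₀, hθ₁⟩, ?_, ?_⟩
  · rw [hAφ, hθy, hθx]
    field_simp
    ring
  · rw [hderiv, ← mul_assoc, hAφ, hθy, hθx]
    field_simp
    ring
end

section
/- Assume h > 0 > ℓ, ℓ^† < kα < h^†, and h^A > ℓ^A, and let β_C = h(ℓ^†−kα)/(ℓ(h^†−kα)). Then β_C > 0, and β_C > 1 if and only if h(ℓ^†−kα) − ℓ(h^†−kα) < 0, which holds if and only if g(p̂) < 0, where p̂ = (kα − ℓ^A)/(h^A − ℓ^A). -/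
/-!
At the indifference point `p̂`, where `p̂ hᴬ + (1 - p̂) ℓᴬ = kα`, the two branches of the
maximum defining `g` coincide, and both equal
`(h(ℓ† - kα) - ℓ(h† - kα)) / (hᴬ - ℓᴬ)`. Since `hᴬ - ℓᴬ > 0`, the sign of `g(p̂)` is that of
`h(ℓ† - kα) - ℓ(h† - kα)`; and since `β_C` is a quotient of two negative numbers, `β_C > 1` says
exactly that this same difference is negative.
-/

open Real

section Crossing

variable {h ℓ hd ld c : ℝ}

lemma expand_payoff_at_crossing (hD : h + hd - (ℓ + ld) ≠ 0) :
    (c - (ℓ + ld)) / (h + hd - (ℓ + ld)) * hd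
        + (1 - (c - (ℓ + ld)) / (h + hd - (ℓ + ld))) * ld - c
      = (h * (ld - c) - ℓ * (hd - c)) / (h + hd - (ℓ + ld)) := by
  field_simp
  ring

lemma exit_payoff_at_crossing (hD : h + hd - (ℓ + ld) ≠ 0) :
    -((c - (ℓ + ld)) / (h + hd - (ℓ + ld)) * h)
        - (1 - (c - (ℓ + ld)) / (h + hd - (ℓ + ld))) * ℓ
      = (h * (ld - c) - ℓ * (hd - c)) / (h + hd - (ℓ + ld)) := by
  field_simp
  ring

end Crossing

theorem stmt_14_general (h ℓ α hd ld k hA lA : ℝ) (hh : 0 < h) (hℓ : ℓ < 0) (hα : 0 < α)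
    (hld : ld < k * α) (hhd : k * α < hd)
    (hhA : hA = h + hd) (hlA : lA = ℓ + ld)
    (g : ℝ → ℝ)
    (hg : ∀ x : ℝ, g x = (1 / α) *
      max (x * hd + (1 - x) * ld - k * α) (-(x * h) - (1 - x) * ℓ))
    (βC phat : ℝ)
    (hβC : βC = h * (ld - k * α) / (ℓ * (hd - k * α)))
    (hphat : phat = (k * α - lA) / (hA - lA)) :
    0 < βC ∧
    (1 < βC ↔ h * (ld - k * α) - ℓ * (hd - k * α) < 0) ∧
    (h * (ld - k * α) - ℓ * (hd - k * α) < 0 ↔ g phat < 0) := by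
  subst hhA hlA hβC hphat
  have hnum : h * (ld - k * α) < 0 := mul_neg_of_pos_of_neg hh (by linarith)
  have hden : ℓ * (hd - k * α) < 0 := mul_neg_of_neg_of_pos hℓ (by linarith)
  have hD : 0 < h + hd - (ℓ + ld) := by linarith
  have hg_phat : g ((k * α - (ℓ + ld)) / (h + hd - (ℓ + ld)))
      = (h * (ld - k * α) - ℓ * (hd - k * α)) / (α * (h + hd - (ℓ + ld))) := by
    rw [hg, expand_payoff_at_crossing hD.ne', exit_payoff_at_crossing hD.ne', max_self,
      mul_div_assoc', one_div_mul_eq_div, div_div]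
  refine ⟨div_pos_of_neg_of_neg hnum hden, (one_lt_div_of_neg hden).trans sub_neg.symm, ?_⟩
  rw [hg_phat, div_lt_iff₀ (mul_pos hα hD), zero_mul]

/-- `β_C = h(ℓ†-kα)/(ℓ(h†-kα)) > 0`, and `β_C > 1` iff
`h(ℓ†-kα) - ℓ(h†-kα) < 0` iff `g(p̂) < 0`, where `p̂ = (kα - ℓᴬ)/(hᴬ - ℓᴬ)`. -/
theorem stmt_14 (h ℓ α hd ld k hA lA : ℝ) (hh : 0 < h) (hℓ : ℓ < 0) (hα : 0 < α)
    (hld : ld < k * α) (hhd : k * α < hd)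
    (hhA : hA = h + hd) (hlA : lA = ℓ + ld) (hAgt : lA < hA)
    (g : ℝ → ℝ)
    (hg : ∀ x : ℝ, g x = (1 / α) *
      max (x * hd + (1 - x) * ld - k * α) (-(x * h) - (1 - x) * ℓ))
    (βC phat : ℝ)
    (hβC : βC = h * (ld - k * α) / (ℓ * (hd - k * α)))
    (hphat : phat = (k * α - lA) / (hA - lA)) :
    0 < βC ∧
    (1 < βC ↔ h * (ld - k * α) - ℓ * (hd - k * α) < 0) ∧
    (h * (ld - k * α) - ℓ * (hd - k * α) < 0 ↔ g phat < 0) :=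
  stmt_14_general h ℓ α hd ld k hA lA hh hℓ hα hld hhd hhA hlA g hg βC phat hβC hphat
end

section
/- Assume h > 0 > ℓ and α > 0, and for σ > 0 define γ(σ) = sqrt(1 + 8ασ²/(h−ℓ)²) and the exit threshold θ̲(σ) = −(γ(σ)−1)ℓ/((γ(σ)+1)h − (γ(σ)−1)ℓ). Then θ̲ is strictly increasing on (0,∞), 0 < θ̲(σ) < −ℓ/(h−ℓ) for every σ > 0, θ̲(σ) → 0 as σ → 0⁺, and θ̲(σ) → −ℓ/(h−ℓ) as σ → ∞. -/
open Real Filter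

/-- The exit threshold `θ̲(σ) = -(γ(σ)-1)ℓ/((γ(σ)+1)h - (γ(σ)-1)ℓ)` is strictly
increasing in `σ` on `(0,∞)`, satisfies `0 < θ̲(σ) < -ℓ/(h-ℓ)` for each `σ > 0`,
tends to `0` as `σ → 0⁺`, and tends to `-ℓ/(h-ℓ)` as `σ → ∞`. -/
theorem stmt_15 (h ℓ α : ℝ) (hh : 0 < h) (hℓ : ℓ < 0) (hα : 0 < α)
    (γ θ : ℝ → ℝ)
    (hγ : ∀ σ : ℝ, γ σ = Real.sqrt (1 + 8 * α * σ ^ 2 / (h - ℓ) ^ 2))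
    (hθ : ∀ σ : ℝ, θ σ = -(γ σ - 1) * ℓ / ((γ σ + 1) * h - (γ σ - 1) * ℓ)) :
    StrictMonoOn θ (Set.Ioi 0) ∧
    (∀ σ : ℝ, 0 < σ → 0 < θ σ ∧ θ σ < -ℓ / (h - ℓ)) ∧
    Tendsto θ (nhdsWithin 0 (Set.Ioi 0)) (nhds 0) ∧
    Tendsto θ atTop (nhds (-ℓ / (h - ℓ))) := by
  have hhl : (0:ℝ) < h - ℓ := by linarith
  have hγ1 : ∀ σ : ℝ, 1 ≤ γ σ := by
    intro σ
    rw [hγ]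
    have h1 : (1:ℝ) ≤ 1 + 8 * α * σ ^ 2 / (h - ℓ) ^ 2 := by
      have : 0 ≤ 8 * α * σ ^ 2 / (h - ℓ) ^ 2 := by positivity
      linarith
    calc (1:ℝ) = Real.sqrt 1 := (Real.sqrt_one).symm
      _ ≤ _ := Real.sqrt_le_sqrt h1
  have hγgt : ∀ σ : ℝ, 0 < σ → 1 < γ σ := by
    intro σ hσ
    rw [hγ]
    have h1 : (1:ℝ) < 1 + 8 * α * σ ^ 2 / (h - ℓ) ^ 2 := by
      have : 0 < 8 * α * σ ^ 2 / (h - ℓ) ^ 2 := by positivity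
      linarith
    calc (1:ℝ) = Real.sqrt 1 := (Real.sqrt_one).symm
      _ < _ := Real.sqrt_lt_sqrt (by norm_num) h1
  have hden : ∀ σ : ℝ, 0 < (γ σ + 1) * h - (γ σ - 1) * ℓ := by
    intro σ
    have := hγ1 σ
    nlinarith
  have hγmono : ∀ a b : ℝ, 0 < a → a < b → γ a < γ b := by
    intro a b ha hab
    rw [hγ, hγ]
    apply Real.sqrt_lt_sqrt (by positivity)
    have hab2 : a ^ 2 < b ^ 2 := by nlinarith
    have : 8 * α * a ^ 2 / (h - ℓ) ^ 2 < 8 * α * b ^ 2 / (h - ℓ) ^ 2 := by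
      gcongr
    linarith
  refine ⟨?_, ?_, ?_, ?_⟩
  · -- strict mono
    intro a ha b hb hab
    simp only [Set.mem_Ioi] at ha hb
    have hga := hγgt a ha
    have hgab := hγmono a b ha hab
    rw [hθ a, hθ b, div_lt_div_iff₀ (hden a) (hden b)]
    nlinarith [mul_pos (mul_pos (neg_pos.2 hℓ) hh) (sub_pos.2 hgab)]
  · -- bounds
    intro σ hσ
    have hg := hγgt σ hσ
    constructor
    · rw [hθ]
      apply div_pos ?_ (hden σ)
      nlinarith
    · rw [hθ, div_lt_div_iff₀ (hden σ) hhl]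
      nlinarith
  · -- limit at 0⁺
    have hθf : θ = fun σ => -(γ σ - 1) * ℓ / ((γ σ + 1) * h - (γ σ - 1) * ℓ) :=
      funext hθ
    have hγf : γ = fun σ => Real.sqrt (1 + 8 * α * σ ^ 2 / (h - ℓ) ^ 2) :=
      funext hγ
    have hγc : Continuous γ := by
      rw [hγf]
      fun_prop
    have hcont : ContinuousAt θ 0 := by
      rw [hθf]
      apply ContinuousAt.div
      · fun_prop
      · fun_prop
      · exact (hden 0).ne'
    have hθ0 : θ 0 = 0 := by
      have hg0 : γ 0 = 1 := by
        rw [hγ]; norm_num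
      rw [hθ, hg0]
      norm_num
    have := hcont.continuousWithinAt (s := Set.Ioi 0) |>.tendsto
    rwa [hθ0] at this
  · -- limit at ∞
    have hγtop : Tendsto γ atTop atTop := by
      have h1 : Tendsto (fun σ : ℝ => 1 + 8 * α * σ ^ 2 / (h - ℓ) ^ 2) atTop atTop := by
        apply tendsto_atTop_add_const_left
        have hsq : Tendsto (fun σ : ℝ => σ ^ 2) atTop atTop :=
          tendsto_pow_atTop (by norm_num)
        have hc : (0:ℝ) < 8 * α / (h - ℓ) ^ 2 := by positivity
        have := hsq.const_mul_atTop hc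
        apply this.congr
        intro x
        field_simp
      have hsqrt : Tendsto Real.sqrt atTop atTop := by
        apply tendsto_atTop_atTop_of_monotone
        · intro x y hxy; exact Real.sqrt_le_sqrt hxy
        · intro b
          exact ⟨b ^ 2, by rw [Real.sqrt_sq_eq_abs]; exact le_abs_self b⟩
      rw [funext hγ]
      exact hsqrt.comp h1
    set F : ℝ → ℝ := fun t => (-ℓ * (1 - t)) / ((h - ℓ) + (h + ℓ) * t) with hF
    have hFc : ContinuousAt F 0 := by
      apply ContinuousAt.div
      · fun_prop
      · fun_prop
      · simp; exact hhl.ne'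
    have hF0 : F 0 = -ℓ / (h - ℓ) := by simp [hF]
    have hinv : Tendsto (fun σ => (γ σ)⁻¹) atTop (nhds 0) :=
      tendsto_inv_atTop_zero.comp hγtop
    have hcomp : Tendsto (fun σ => F (γ σ)⁻¹) atTop (nhds (-ℓ / (h - ℓ))) := by
      rw [← hF0]
      exact hFc.tendsto.comp hinv
    apply hcomp.congr
    intro σ
    have hg1 := hγ1 σ
    have hg0 : γ σ ≠ 0 := by linarith
    have hd := (hden σ).ne'
    have hd2 : (h - ℓ) + (h + ℓ) * (γ σ)⁻¹ ≠ 0 := by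
      have heq : (h - ℓ) + (h + ℓ) * (γ σ)⁻¹ = ((γ σ + 1) * h - (γ σ - 1) * ℓ) / γ σ := by
        field_simp
        ring
      rw [heq]
      exact div_ne_zero hd hg0
    rw [hθ, hF]
    simp only
    rw [div_eq_div_iff hd2 hd]
    field_simp
    ring
end

section
/- Assume ℓ^† < kα < h^†, h > ℓ, and α > 0, and for σ > 0 define γ(σ) = sqrt(1 + 8ασ²/(h−ℓ)²) and the expansion threshold θ̄(σ) = −(γ(σ)+1)(ℓ^†−kα)/((γ(σ)−1)(h^†−kα) − (γ(σ)+1)(ℓ^†−kα)). Then θ̄ is strictly decreasing on (0,∞), (kα−ℓ^†)/(h^†−ℓ^†) < θ̄(σ) < 1 for every σ > 0, θ̄(σ) → 1 as σ → 0⁺, and θ̄(σ) → (kα−ℓ^†)/(h^†−ℓ^†) as σ → ∞. -/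
open Real Filter

/-!
Writing `A = kα - ℓ†` and `B = h† - kα` (both positive), the threshold is the Möbius map
`x ↦ A(x+1) / (A(x+1) + B(x-1))` evaluated at `x = γ(σ)`. On `[1, ∞)` this map is strictly
decreasing from `1` towards `A/(A+B)`, while `γ(σ) = √(1 + cσ²)` with `c = 8α/(h-ℓ)² > 0`
increases strictly from `γ(0) = 1` to `∞`.
-/

noncomputable def expansionThreshold (A B x : ℝ) : ℝ :=
  A * (x + 1) / (A * (x + 1) + B * (x - 1))

section expansionThreshold

variable {A B : ℝ}

lemma expansionThreshold_one (hA : A ≠ 0) : expansionThreshold A B 1 = 1 := by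
  simp [expansionThreshold, hA]

lemma expansionThreshold_denom_pos (hA : 0 < A) (hB : 0 ≤ B) {x : ℝ} (hx : 1 ≤ x) :
    0 < A * (x + 1) + B * (x - 1) := by
  nlinarith

lemma strictAntiOn_expansionThreshold (hA : 0 < A) (hB : 0 < B) :
    StrictAntiOn (expansionThreshold A B) (Set.Ici 1) := by
  intro x hx y hy hxy
  rw [expansionThreshold, expansionThreshold,
    div_lt_div_iff₀ (expansionThreshold_denom_pos hA hB.le hy)
      (expansionThreshold_denom_pos hA hB.le hx)]
  nlinarith [mul_pos (mul_pos hA hB) (sub_pos.2 hxy)]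

lemma div_add_lt_expansionThreshold (hA : 0 < A) (hB : 0 < B) {x : ℝ} (hx : 1 ≤ x) :
    A / (A + B) < expansionThreshold A B x := by
  rw [expansionThreshold, div_lt_div_iff₀ (by linarith) (expansionThreshold_denom_pos hA hB.le hx)]
  nlinarith [mul_pos hA hB]

lemma expansionThreshold_lt_one (hA : 0 < A) (hB : 0 < B) {x : ℝ} (hx : 1 < x) :
    expansionThreshold A B x < 1 :=
  expansionThreshold_one (B := B) hA.ne' ▸
    strictAntiOn_expansionThreshold hA hB Set.self_mem_Ici hx.le hx

lemma continuousAt_expansionThreshold_one (hA : A ≠ 0) :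
    ContinuousAt (expansionThreshold A B) 1 :=
  ContinuousAt.div (by fun_prop) (by fun_prop) (by norm_num [hA])

lemma tendsto_expansionThreshold_atTop (hAB : A + B ≠ 0) :
    Tendsto (expansionThreshold A B) atTop (nhds (A / (A + B))) := by
  have hinv : Tendsto (fun x : ℝ => x⁻¹) atTop (nhds 0) := tendsto_inv_atTop_zero
  have hlim : Tendsto (fun x : ℝ => A * (1 + x⁻¹) / (A * (1 + x⁻¹) + B * (1 - x⁻¹))) atTop
      (nhds (A / (A + B))) := by
    convert ((hinv.const_add 1).const_mul A).div
      (((hinv.const_add 1).const_mul A).add ((hinv.const_sub 1).const_mul B)) (by simpa) using 2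
    <;> simp
  refine hlim.congr' ?_
  filter_upwards [eventually_gt_atTop 0] with x hx
  rw [expansionThreshold]
  field_simp

end expansionThreshold

section sqrtOneAddMulSq

variable {c : ℝ}

lemma strictMonoOn_sqrt_one_add_mul_sq (hc : 0 < c) :
    StrictMonoOn (fun σ : ℝ => √(1 + c * σ ^ 2)) (Set.Ici 0) := by
  intro x (hx : 0 ≤ x) y _ hxy
  exact Real.sqrt_lt_sqrt (by positivity) (by gcongr)

lemma one_lt_sqrt_one_add_mul_sq (hc : 0 < c) {σ : ℝ} (hσ : σ ≠ 0) :
    1 < √(1 + c * σ ^ 2) := by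
  rw [Real.lt_sqrt zero_le_one]
  have : 0 < c * σ ^ 2 := by positivity
  linarith

lemma tendsto_sqrt_one_add_mul_sq_atTop (hc : 0 < c) :
    Tendsto (fun σ : ℝ => √(1 + c * σ ^ 2)) atTop atTop :=
  Real.tendsto_sqrt_atTop.comp <| tendsto_atTop_add_const_left _ 1 <|
    (tendsto_pow_atTop two_ne_zero).const_mul_atTop hc

lemma tendsto_sqrt_one_add_mul_sq_zero :
    Tendsto (fun σ : ℝ => √(1 + c * σ ^ 2)) (nhds 0) (nhds 1) := by
  have : Continuous (fun σ : ℝ => √(1 + c * σ ^ 2)) := by fun_prop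
  simpa using this.tendsto 0

end sqrtOneAddMulSq

/-- The expansion threshold
`θ̄(σ) = -(γ(σ)+1)(ℓ†-kα)/((γ(σ)-1)(h†-kα) - (γ(σ)+1)(ℓ†-kα))` is strictly
decreasing in `σ` on `(0,∞)`, satisfies `(kα-ℓ†)/(h†-ℓ†) < θ̄(σ) < 1` for each
`σ > 0`, tends to `1` as `σ → 0⁺`, and tends to `(kα-ℓ†)/(h†-ℓ†)` as `σ → ∞`. -/
theorem stmt_16 (h ℓ α hd ld k : ℝ) (hhl : ℓ < h) (hα : 0 < α)
    (hld : ld < k * α) (hhd : k * α < hd)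
    (γ θ : ℝ → ℝ)
    (hγ : ∀ σ : ℝ, γ σ = Real.sqrt (1 + 8 * α * σ ^ 2 / (h - ℓ) ^ 2))
    (hθ : ∀ σ : ℝ, θ σ = -(γ σ + 1) * (ld - k * α) /
      ((γ σ - 1) * (hd - k * α) - (γ σ + 1) * (ld - k * α))) :
    StrictAntiOn θ (Set.Ioi 0) ∧
    (∀ σ : ℝ, 0 < σ → (k * α - ld) / (hd - ld) < θ σ ∧ θ σ < 1) ∧
    Tendsto θ (nhdsWithin 0 (Set.Ioi 0)) (nhds 1) ∧
    Tendsto θ atTop (nhds ((k * α - ld) / (hd - ld))) := by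
  set A := k * α - ld
  set B := hd - k * α
  have hA : 0 < A := sub_pos.2 hld
  have hB : 0 < B := sub_pos.2 hhd
  have hc : 0 < 8 * α / (h - ℓ) ^ 2 := by have := sub_pos.2 hhl; positivity
  have hγ_eq : γ = fun σ => √(1 + 8 * α / (h - ℓ) ^ 2 * σ ^ 2) :=
    funext fun σ => by rw [hγ, mul_div_right_comm]
  have hθ_eq : θ = expansionThreshold A B ∘ γ := funext fun σ => by
    rw [hθ, Function.comp_apply, expansionThreshold]
    congr 1 <;> ring
  have hlim : (k * α - ld) / (hd - ld) = A / (A + B) := by congr 1; ring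
  subst hθ_eq hγ_eq
  have hγ_gt (σ : ℝ) (hσ : 0 < σ) : 1 < √(1 + 8 * α / (h - ℓ) ^ 2 * σ ^ 2) :=
    one_lt_sqrt_one_add_mul_sq hc hσ.ne'
  rw [hlim]
  refine ⟨?_, fun σ hσ => ⟨?_, ?_⟩, ?_, ?_⟩
  · exact (strictAntiOn_expansionThreshold hA hB).comp_strictMonoOn
      ((strictMonoOn_sqrt_one_add_mul_sq hc).mono Set.Ioi_subset_Ici_self)
      fun σ hσ => (hγ_gt σ hσ).le
  · exact div_add_lt_expansionThreshold hA hB (hγ_gt σ hσ).le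
  · exact expansionThreshold_lt_one hA hB (hγ_gt σ hσ)
  · simpa only [expansionThreshold_one hA.ne'] using
      (continuousAt_expansionThreshold_one (B := B) hA.ne').tendsto.comp
        (tendsto_sqrt_one_add_mul_sq_zero.mono_left nhdsWithin_le_nhds)
  · exact (tendsto_expansionThreshold_atTop (by positivity)).comp
      (tendsto_sqrt_one_add_mul_sq_atTop hc)
end

section
/- Let h > ℓ, σ > 0, and 0 < θ̲ < θ̄ < 1, and define E(p) = ((p−θ̲)/(θ̄−θ̲))·T(θ̄) + ((θ̄−p)/(θ̄−θ̲))·T(θ̲) − T(p). Then E(θ̲) = E(θ̄) = 0; (1/2)·((h−ℓ)/σ)²·p²(1−p)²·E''(p) = −1 for every p ∈ (θ̲, θ̄); and E(p) > 0 for every p ∈ (θ̲, θ̄). -/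
open Real

/-!
Write `T = c g` with `c = 2σ²/(h-ℓ)² > 0` and `g p = (2p-1) log(p/(1-p))`; a direct computation
gives `g'' p = (p(1-p))⁻²`. Now `E` is the gap between the chord of `T` over `[θ̲, θ̄]` and `T`
itself, so it vanishes at both ends and `E'' = -T'' = -c (p(1-p))⁻²`, which is the differential
equation. Since `g'' > 0`, `T` is strictly convex and lies strictly below its chord, so `E > 0`.
-/

open Filter Topology

theorem deriv_deriv_eq_of_eventually_hasDerivAt {𝕜 : Type*} [NontriviallyNormedField 𝕜]
    {f f' : 𝕜 → 𝕜} {f'' x : 𝕜} (hf : ∀ᶠ y in 𝓝 x, HasDerivAt f (f' y) y)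
    (hf' : HasDerivAt f' f'' x) : deriv (deriv f) x = f'' :=
  EventuallyEq.deriv_eq (hf.mono fun _ hy => hy.deriv) |>.trans hf'.deriv

def chordGap {𝕜 : Type*} [Field 𝕜] (a b : 𝕜) (f : 𝕜 → 𝕜) (y : 𝕜) : 𝕜 :=
  (y - a) / (b - a) * f b + (b - y) / (b - a) * f a - f y

section chordGap

variable {𝕜 : Type*}

section Field

variable [Field 𝕜] {a b : 𝕜}

theorem chordGap_left (f : 𝕜 → 𝕜) (hab : a ≠ b) : chordGap a b f a = 0 := by
  have : b - a ≠ 0 := sub_ne_zero.2 hab.symm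
  simp only [chordGap]
  field_simp
  ring

theorem chordGap_right (f : 𝕜 → 𝕜) (hab : a ≠ b) : chordGap a b f b = 0 := by
  have : b - a ≠ 0 := sub_ne_zero.2 hab.symm
  simp only [chordGap]
  field_simp
  ring

theorem chordGap_const_mul (c : 𝕜) (f : 𝕜 → 𝕜) (y : 𝕜) :
    chordGap a b (fun x => c * f x) y = c * chordGap a b f y := by
  simp only [chordGap]
  ring

end Field

theorem StrictConvexOn.chordGap_pos [Field 𝕜] [LinearOrder 𝕜] [IsStrictOrderedRing 𝕜]
    {s : Set 𝕜} {f : 𝕜 → 𝕜} {a b y : 𝕜} (hf : StrictConvexOn 𝕜 s f) (ha : a ∈ s) (hb : b ∈ s)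
    (hay : a < y) (hyb : y < b) : 0 < chordGap a b f y := by
  have hba : 0 < b - a := sub_pos.2 (hay.trans hyb)
  have hgap : chordGap a b f y = ((b - y) * f a + (y - a) * f b - (b - a) * f y) / (b - a) := by
    simp only [chordGap]
    field_simp
    ring
  rw [hgap]
  exact div_pos (sub_pos.2 (hf.secant_strict_mono_aux1 ha hb hay hyb)) hba

section NormedField

variable [NontriviallyNormedField 𝕜] {a b : 𝕜}

theorem hasDerivAt_chordGap {f : 𝕜 → 𝕜} {f' y : 𝕜} (hf : HasDerivAt f f' y) :
    HasDerivAt (chordGap a b f) ((f b - f a) / (b - a) - f') y := by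
  refine (((((hasDerivAt_id' y).sub_const a).div_const _).mul_const _).add
    ((((hasDerivAt_const y b).sub (hasDerivAt_id' y)).div_const _).mul_const _)
    |>.sub hf).congr_deriv ?_
  ring

theorem deriv_deriv_chordGap {f f' : 𝕜 → 𝕜} {f'' x : 𝕜}
    (hf : ∀ᶠ y in 𝓝 x, HasDerivAt f (f' y) y) (hf' : HasDerivAt f' f'' x) :
    deriv (deriv (chordGap a b f)) x = -f'' :=
  deriv_deriv_eq_of_eventually_hasDerivAt (hf.mono fun _ => hasDerivAt_chordGap)
    (hf'.const_sub _)

end NormedField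

end chordGap

noncomputable def logit (p : ℝ) : ℝ := log (p / (1 - p))

section logit

variable {x : ℝ}

theorem hasDerivAt_logit (h0 : x ≠ 0) (h1 : x ≠ 1) :
    HasDerivAt logit (x * (1 - x))⁻¹ x := by
  have h1' : 1 - x ≠ 0 := sub_ne_zero.2 h1.symm
  have hratio : HasDerivAt (fun y => y / (1 - y)) ((1 * (1 - x) - x * (0 - 1)) / (1 - x) ^ 2) x :=
    (hasDerivAt_id' x).div ((hasDerivAt_const x 1).sub (hasDerivAt_id' x)) h1'
  refine (hratio.log (div_ne_zero h0 h1')).congr_deriv ?_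
  field_simp
  ring

theorem hasDerivAt_mul_logit (h0 : x ≠ 0) (h1 : x ≠ 1) :
    HasDerivAt (fun y => (2 * y - 1) * logit y)
      (2 * logit x + (2 * x - 1) / (x * (1 - x))) x := by
  have hlin : HasDerivAt (fun y : ℝ => 2 * y - 1) 2 x := by
    simpa using ((hasDerivAt_id' x).const_mul 2).sub_const 1
  refine (hlin.mul (hasDerivAt_logit h0 h1)).congr_deriv ?_
  ring

theorem hasDerivAt_deriv_mul_logit (h0 : x ≠ 0) (h1 : x ≠ 1) :
    HasDerivAt (fun y => 2 * logit y + (2 * y - 1) / (y * (1 - y))) ((x * (1 - x))⁻¹ ^ 2) x := by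
  have h1' : 1 - x ≠ 0 := sub_ne_zero.2 h1.symm
  have hlin : HasDerivAt (fun y : ℝ => 2 * y - 1) 2 x := by
    simpa using ((hasDerivAt_id' x).const_mul 2).sub_const 1
  have hden : HasDerivAt (fun y : ℝ => y * (1 - y)) (1 * (1 - x) + x * (0 - 1)) x :=
    (hasDerivAt_id' x).mul ((hasDerivAt_const x 1).sub (hasDerivAt_id' x))
  refine (((hasDerivAt_logit h0 h1).const_mul 2).add
    (hlin.div hden (mul_ne_zero h0 h1'))).congr_deriv ?_
  field_simp
  ring

theorem eventually_hasDerivAt_mul_logit (h0 : x ≠ 0) (h1 : x ≠ 1) :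
    ∀ᶠ y in 𝓝 x, HasDerivAt (fun y => (2 * y - 1) * logit y)
      (2 * logit y + (2 * y - 1) / (y * (1 - y))) y := by
  filter_upwards [eventually_ne_nhds h0, eventually_ne_nhds h1] with y hy0 hy1
  exact hasDerivAt_mul_logit hy0 hy1

theorem strictConvexOn_mul_logit :
    StrictConvexOn ℝ (Set.Ioo 0 1) fun y => (2 * y - 1) * logit y := by
  refine strictConvexOn_of_deriv2_pos' (convex_Ioo 0 1) ?_ fun x ⟨hx0, hx1⟩ => ?_
  · exact fun x ⟨hx0, hx1⟩ =>
      (hasDerivAt_mul_logit hx0.ne' hx1.ne).continuousAt.continuousWithinAt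
  · rw [Function.iterate_succ_apply, Function.iterate_one,
      deriv_deriv_eq_of_eventually_hasDerivAt (eventually_hasDerivAt_mul_logit hx0.ne' hx1.ne)
        (hasDerivAt_deriv_mul_logit hx0.ne' hx1.ne)]
    have : 0 < 1 - x := sub_pos.2 hx1
    positivity

end logit

/-- The expected time-to-decision
`E(p) = ((p-θ̲)/(θ̄-θ̲))T(θ̄) + ((θ̄-p)/(θ̄-θ̲))T(θ̲) - T(p)` vanishes at the two
thresholds, satisfies `(1/2)((h-ℓ)/σ)² p²(1-p)² E''(p) = -1` on `(θ̲,θ̄)`, and is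
strictly positive on `(θ̲,θ̄)`. -/
theorem stmt_17 (h ℓ σ : ℝ) (hhl : ℓ < h) (hσ : 0 < σ)
    (θl θu : ℝ) (hθl : 0 < θl) (hθlu : θl < θu) (hθu : θu < 1)
    (T E : ℝ → ℝ)
    (hT : ∀ p : ℝ, T p = (2 * σ ^ 2 / (h - ℓ) ^ 2) * (2 * p - 1) * Real.log (p / (1 - p)))
    (hE : ∀ p : ℝ, E p = ((p - θl) / (θu - θl)) * T θu + ((θu - p) / (θu - θl)) * T θl - T p) :
    E θl = 0 ∧ E θu = 0 ∧
    (∀ p ∈ Set.Ioo θl θu,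
      (1 / 2) * ((h - ℓ) / σ) ^ 2 * p ^ 2 * (1 - p) ^ 2 * deriv (deriv E) p = -1) ∧
    (∀ p ∈ Set.Ioo θl θu, 0 < E p) := by
  have hhl' : h - ℓ ≠ 0 := sub_ne_zero.2 hhl.ne'
  have hTc : T = fun p => 2 * σ ^ 2 / (h - ℓ) ^ 2 * ((2 * p - 1) * logit p) :=
    funext fun p => by rw [hT, logit]; ring
  obtain rfl : E = chordGap θl θu T := funext hE
  refine ⟨chordGap_left T hθlu.ne, chordGap_right T hθlu.ne, fun p ⟨hlp, hpu⟩ => ?_,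
    fun p ⟨hlp, hpu⟩ => ?_⟩ <;> rw [hTc]
  · have hp0 : p ≠ 0 := (hθl.trans hlp).ne'
    have hp1 : p ≠ 1 := (hpu.trans hθu).ne
    have : 1 - p ≠ 0 := sub_ne_zero.2 hp1.symm
    rw [deriv_deriv_chordGap
      ((eventually_hasDerivAt_mul_logit hp0 hp1).mono fun _ hy => hy.const_mul _)
      ((hasDerivAt_deriv_mul_logit hp0 hp1).const_mul _)]
    field_simp
  · rw [chordGap_const_mul]
    exact mul_pos (by positivity) (strictConvexOn_mul_logit.chordGap_pos
      ⟨hθl, hθlu.trans hθu⟩ ⟨hθl.trans hθlu, hθu⟩ hlp hpu)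
end

section
/- Assume h^A > 0 > ℓ^A, α > 0, σ > 0, and let θ^A = −(γ−1)ℓ^A/((γ+1)h^A − (γ−1)ℓ^A) and C = (2/(α·sqrt(γ²−1)))·((γ−1)/(γ+1))^{γ/2}·(h^A)^{(1−γ)/2}·(−ℓ^A)^{(1+γ)/2}. Then θ^A ∈ (0,1), (θ^A h^A + (1−θ^A)ℓ^A)/α + C·(θ^A)^{(1−γ)/2}(1−θ^A)^{(1+γ)/2} = 0, and the derivative of the map p ↦ (p h^A + (1−p)ℓ^A)/α + C·p^{(1−γ)/2}(1−p)^{(1+γ)/2} vanishes at p = θ^A. -/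
open Real

/-- The post-expansion exit threshold `θᴬ = -(γ-1)ℓᴬ/((γ+1)hᴬ - (γ-1)ℓᴬ)` lies in
`(0,1)`, and with `C = (2/(α√(γ²-1)))((γ-1)/(γ+1))^(γ/2)(hᴬ)^((1-γ)/2)(-ℓᴬ)^((1+γ)/2)`
the value-matching and smooth-pasting conditions of the post-expansion optimal
return hold at `θᴬ`. -/
theorem stmt_19 (h ℓ σ σA α hA lA : ℝ) (hhA : 0 < hA) (hlA : lA < 0)
    (hα : 0 < α) (hσ : 0 < σ) (hσA : 0 < σA) (hhl : ℓ < h)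
    (hrel : (hA - lA) / σA = (h - ℓ) / σ)
    (γ : ℝ) (hγ : γ = Real.sqrt (1 + 8 * α * σ ^ 2 / (h - ℓ) ^ 2))
    (θA C : ℝ)
    (hθA : θA = -(γ - 1) * lA / ((γ + 1) * hA - (γ - 1) * lA))
    (hC : C = (2 / (α * Real.sqrt (γ ^ 2 - 1))) * ((γ - 1) / (γ + 1)) ^ (γ / 2) *
      hA ^ ((1 - γ) / 2) * (-lA) ^ ((1 + γ) / 2)) :
    θA ∈ Set.Ioo (0 : ℝ) 1 ∧
    (θA * hA + (1 - θA) * lA) / α + C * θA ^ ((1 - γ) / 2) * (1 - θA) ^ ((1 + γ) / 2) = 0 ∧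
    deriv (fun p : ℝ =>
      (p * hA + (1 - p) * lA) / α + C * p ^ ((1 - γ) / 2) * (1 - p) ^ ((1 + γ) / 2)) θA = 0 := by
  -- γ > 1
  have hγ1 : 1 < γ := by
    rw [hγ]
    have h1 : (0:ℝ) < 8 * α * σ ^ 2 / (h - ℓ) ^ 2 := by
      exact div_pos (by positivity) (pow_pos (by linarith) 2)
    have : (1:ℝ) < 1 + 8 * α * σ ^ 2 / (h - ℓ) ^ 2 := by linarith
    nlinarith [Real.sq_sqrt (by linarith : (0:ℝ) ≤ 1 + 8 * α * σ ^ 2 / (h - ℓ) ^ 2),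
      Real.sqrt_nonneg (1 + 8 * α * σ ^ 2 / (h - ℓ) ^ 2)]
  have hg1 : (0:ℝ) < γ - 1 := by linarith
  have hg2 : (0:ℝ) < γ + 1 := by linarith
  set a : ℝ := (γ - 1) * (-lA) with ha_def
  set b : ℝ := (γ + 1) * hA with hb_def
  have ha : 0 < a := mul_pos hg1 (by linarith)
  have hb : 0 < b := by positivity
  have hs : 0 < a + b := by linarith
  have hθ : θA = a / (a + b) := by
    rw [hθA]; congr 1 <;> ring
  have h1θ : 1 - θA = b / (a + b) := by
    rw [hθ]; field_simp; ring
  have hθpos : 0 < θA := by rw [hθ]; positivity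
  have hθlt : θA < 1 := by rw [hθ]; rw [div_lt_one hs]; linarith
  have h1θpos : 0 < 1 - θA := by linarith
  -- key rpow computation: C * a^e1 * b^e2 = 2*hA*(-lA)/α
  have hsq : Real.sqrt (γ ^ 2 - 1) = Real.sqrt (γ - 1) * Real.sqrt (γ + 1) := by
    rw [← Real.sqrt_mul hg1.le]; congr 1; ring
  have hsqpos : 0 < Real.sqrt (γ - 1) * Real.sqrt (γ + 1) := by
    positivity
  have hpow1 : (γ - 1) ^ (γ / 2) * (γ - 1) ^ ((1 - γ) / 2) = Real.sqrt (γ - 1) := by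
    rw [← Real.rpow_add hg1, Real.sqrt_eq_rpow]
    congr 1; ring
  have hpow2 : (γ + 1) ^ ((1 + γ) / 2) / (γ + 1) ^ (γ / 2) = Real.sqrt (γ + 1) := by
    rw [← Real.rpow_sub hg2, Real.sqrt_eq_rpow]
    congr 1; ring
  have hpow3 : hA ^ ((1 - γ) / 2) * hA ^ ((1 + γ) / 2) = hA := by
    rw [← Real.rpow_add hhA, show (1 - γ) / 2 + (1 + γ) / 2 = (1:ℝ) from by ring, Real.rpow_one]
  have hpow4 : (-lA) ^ ((1 - γ) / 2) * (-lA) ^ ((1 + γ) / 2) = -lA := by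
    rw [← Real.rpow_add (by linarith : (0:ℝ) < -lA),
      show (1 - γ) / 2 + (1 + γ) / 2 = (1:ℝ) from by ring, Real.rpow_one]
  have hCab : C * a ^ ((1 - γ) / 2) * b ^ ((1 + γ) / 2) = 2 * hA * (-lA) / α := by
    rw [hC, ha_def, hb_def, Real.mul_rpow hg1.le (by linarith : (0:ℝ) ≤ -lA),
      Real.mul_rpow hg2.le hhA.le, Real.div_rpow hg1.le hg2.le, hsq]
    rw [show 2 / (α * (Real.sqrt (γ - 1) * Real.sqrt (γ + 1))) *
        ((γ - 1) ^ (γ / 2) / (γ + 1) ^ (γ / 2)) * hA ^ ((1 - γ) / 2) * (-lA) ^ ((1 + γ) / 2) *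
        ((γ - 1) ^ ((1 - γ) / 2) * (-lA) ^ ((1 - γ) / 2)) *
        ((γ + 1) ^ ((1 + γ) / 2) * hA ^ ((1 + γ) / 2)) =
        2 / (α * (Real.sqrt (γ - 1) * Real.sqrt (γ + 1))) *
        ((γ - 1) ^ (γ / 2) * (γ - 1) ^ ((1 - γ) / 2)) *
        ((γ + 1) ^ ((1 + γ) / 2) / (γ + 1) ^ (γ / 2)) *
        (hA ^ ((1 - γ) / 2) * hA ^ ((1 + γ) / 2)) *
        ((-lA) ^ ((1 - γ) / 2) * (-lA) ^ ((1 + γ) / 2)) from by ring,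
      hpow1, hpow2, hpow3, hpow4]
    field_simp
  -- the value of C * θA^e1 * (1-θA)^e2
  have hM : C * θA ^ ((1 - γ) / 2) * (1 - θA) ^ ((1 + γ) / 2)
      = 2 * hA * (-lA) / (α * (a + b)) := by
    rw [h1θ, hθ, Real.div_rpow ha.le hs.le, Real.div_rpow hb.le hs.le]
    have hss : (a + b) ^ ((1 - γ) / 2) * (a + b) ^ ((1 + γ) / 2) = a + b := by
      rw [← Real.rpow_add hs, show (1 - γ) / 2 + (1 + γ) / 2 = (1:ℝ) from by ring,
        Real.rpow_one]
    have h1 : (a + b) ^ ((1 - γ) / 2) ≠ 0 := by positivity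
    have h2 : (a + b) ^ ((1 + γ) / 2) ≠ 0 := by positivity
    have hrw : C * (a ^ ((1 - γ) / 2) / (a + b) ^ ((1 - γ) / 2)) *
        (b ^ ((1 + γ) / 2) / (a + b) ^ ((1 + γ) / 2)) =
        C * a ^ ((1 - γ) / 2) * b ^ ((1 + γ) / 2) /
          ((a + b) ^ ((1 - γ) / 2) * (a + b) ^ ((1 + γ) / 2)) := by
      ring
    rw [hrw, hss, hCab, div_div]
  refine ⟨⟨hθpos, hθlt⟩, ?_, ?_⟩
  · -- value matching
    rw [hM, h1θ, hθ]
    field_simp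
    ring
  · -- smooth pasting
    have d1 : HasDerivAt (fun p : ℝ => (p * hA + (1 - p) * lA) / α) ((hA - lA) / α) θA := by
      have : HasDerivAt (fun p : ℝ => p * hA + (1 - p) * lA) (hA - lA) θA := by
        have := ((hasDerivAt_id θA).mul_const hA).add
          (((hasDerivAt_const θA (1:ℝ)).sub (hasDerivAt_id θA)).mul_const lA)
        exact this.congr_deriv (by ring)
      exact this.div_const α
    have d2 : HasDerivAt (fun p : ℝ => C * p ^ ((1 - γ) / 2))
        (C * (((1 - γ) / 2) * θA ^ ((1 - γ) / 2 - 1))) θA :=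
      (Real.hasDerivAt_rpow_const (Or.inl hθpos.ne')).const_mul C
    have d3 : HasDerivAt (fun p : ℝ => (1 - p) ^ ((1 + γ) / 2))
        ((0 - 1) * ((1 + γ) / 2) * (1 - θA) ^ ((1 + γ) / 2 - 1)) θA :=
      ((hasDerivAt_const θA (1:ℝ)).sub (hasDerivAt_id θA)).rpow_const (Or.inl h1θpos.ne')
    have D : deriv (fun p : ℝ =>
      (p * hA + (1 - p) * lA) / α + C * p ^ ((1 - γ) / 2) * (1 - p) ^ ((1 + γ) / 2)) θA = _ :=
      (d1.add (d2.mul d3)).deriv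
    rw [D]
    have e1 : θA ^ ((1 - γ) / 2 - 1) = θA ^ ((1 - γ) / 2) / θA :=
      Real.rpow_sub_one hθpos.ne' _
    have e2 : (1 - θA) ^ ((1 + γ) / 2 - 1) = (1 - θA) ^ ((1 + γ) / 2) / (1 - θA) :=
      Real.rpow_sub_one h1θpos.ne' _
    rw [e1, e2]
    have key : C * (((1 - γ) / 2) * (θA ^ ((1 - γ) / 2) / θA)) * (1 - θA) ^ ((1 + γ) / 2) +
        C * θA ^ ((1 - γ) / 2) *
          ((0 - 1) * ((1 + γ) / 2) * ((1 - θA) ^ ((1 + γ) / 2) / (1 - θA))) =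
        (C * θA ^ ((1 - γ) / 2) * (1 - θA) ^ ((1 + γ) / 2)) * ((1 - γ) / 2) / θA -
        (C * θA ^ ((1 - γ) / 2) * (1 - θA) ^ ((1 + γ) / 2)) * ((1 + γ) / 2) / (1 - θA) := by
      ring
    rw [key, hM]
    have t1 : 2 * hA * -lA / (α * (a + b)) * ((1 - γ) / 2) / θA = -(hA / α) := by
      rw [div_eq_iff hθpos.ne', hθ]
      field_simp
      ring
    have t2 : 2 * hA * -lA / (α * (a + b)) * ((1 + γ) / 2) / (1 - θA) = -lA / α := by
      rw [div_eq_iff h1θpos.ne', h1θ]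
      field_simp
      ring
    rw [t1, t2]
    ring
end
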